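/- arXiv:2211.13375 — 3 statements merged into one kernel-verified Lean document; each statement's English description precedes it below -/
import Mathlib

section
/- Let (Ω, μ) be a probability space, let k, n ≥ 1, let P be an invertible row-stochastic k×k real matrix (nonnegative entries, rows summing to 1), let d ∈ ℝ^k with 0 ≤ d_i ≤ 1 for all i, and set d̃ = P⁻¹ d. Fix weights α_1,…,α_n ∈ ℝ with |α_i| ≤ 1 and true label indices r(1),…,r(n) ∈ {1,…,k}, and let Z_1,…,Z_n : Ω → {1,…,k} be independent random variables with Pr(Z_i = j) = P_{r(i), j}. Set c₁ = 1 + √k·‖P⁻¹‖, where ‖·‖ is the operator norm induced by the Euclidean norm (spectral norm). Then for every δ ∈ (0,1), with probability at least 1 − δ, |(1/n) Σ_{i=1}^n α_i (d̃_{Z_i} − d_{r(i)})| ≤ c₁ √(2 log(2/δ) / n). -/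
open MeasureTheory Matrix

/-!
Each summand `α i * (d̃ (Z i) - d (r i))` is a bounded function of the single noisy label `Z i`.
It is centred because `d̃ = P⁻¹ d` makes the expectation of `d̃ (Z i)` under row `r i` of `P` equal
to `(P (P⁻¹ d)) (r i) = d (r i)`, and it is bounded by `c₁` because a coordinate of `P⁻¹ d` is at
most `‖P⁻¹ d‖₂ ≤ ‖P⁻¹‖ ‖d‖₂ ≤ ‖P⁻¹‖ √k`. Hoeffding's lemma makes every summand
sub-Gaussian with parameter `c₁²`, and the two-sided Hoeffding inequality for independent
sub-Gaussian variables gives the deviation bound.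
-/

open ProbabilityTheory Real Finset
open scoped NNReal

lemma EuclideanSpace.norm_toLp_le_sqrt_card {ι : Type*} [Fintype ι] {v : ι → ℝ}
    (hv : ∀ i, |v i| ≤ 1) : ‖WithLp.toLp 2 v‖ ≤ √(Fintype.card ι) := by
  rw [EuclideanSpace.norm_eq]
  refine Real.sqrt_le_sqrt ?_
  calc ∑ i, ‖v i‖ ^ 2 ≤ ∑ _i : ι, (1 : ℝ) := by
        gcongr with i
        rw [Real.norm_eq_abs]
        exact pow_le_one₀ (abs_nonneg _) (hv i)
    _ = Fintype.card ι := by simp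

lemma Matrix.abs_mulVec_apply_le {ι : Type*} [Fintype ι] [DecidableEq ι] (A : Matrix ι ι ℝ)
    {v : ι → ℝ} (hv : ∀ i, |v i| ≤ 1) (j : ι) :
    |(A *ᵥ v) j| ≤ √(Fintype.card ι) * ‖toEuclideanCLM (𝕜 := ℝ) A‖ := by
  set T := toEuclideanCLM (𝕜 := ℝ) A
  calc |(A *ᵥ v) j| = ‖T (WithLp.toLp 2 v) j‖ := rfl
    _ ≤ ‖T (WithLp.toLp 2 v)‖ := PiLp.norm_apply_le _ _
    _ ≤ ‖T‖ * ‖WithLp.toLp 2 v‖ := T.le_opNorm _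
    _ ≤ ‖T‖ * √(Fintype.card ι) := by
        gcongr; exact EuclideanSpace.norm_toLp_le_sqrt_card hv
    _ = √(Fintype.card ι) * ‖T‖ := mul_comm _ _

lemma abs_mul_inv_mulVec_apply_sub_le {ι : Type*} [Fintype ι] [DecidableEq ι]
    {P : Matrix ι ι ℝ} {a : ℝ} (ha : |a| ≤ 1) {d : ι → ℝ} (hd : ∀ i, 0 ≤ d i ∧ d i ≤ 1)
    (j l : ι) :
    |a * ((P⁻¹ *ᵥ d) j - d l)| ≤ 1 + √(Fintype.card ι) * ‖toEuclideanCLM (𝕜 := ℝ) P⁻¹‖ := by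
  have hd_abs : ∀ i, |d i| ≤ 1 := fun i => abs_le.2 ⟨by linarith [(hd i).1], (hd i).2⟩
  rw [abs_mul]
  calc |a| * |(P⁻¹ *ᵥ d) j - d l| ≤ 1 * (|(P⁻¹ *ᵥ d) j| + |d l|) :=
        mul_le_mul ha (abs_sub _ _) (abs_nonneg _) zero_le_one
    _ ≤ 1 + √(Fintype.card ι) * ‖toEuclideanCLM (𝕜 := ℝ) P⁻¹‖ := by
        linarith [P⁻¹.abs_mulVec_apply_le hd_abs j, hd_abs l]

section FiniteValued

variable {Ω α : Type*} [MeasurableSpace Ω] {μ : Measure Ω} [IsFiniteMeasure μ]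
  [Fintype α] [MeasurableSpace α] [MeasurableSingletonClass α] {Z : Ω → α}

lemma integral_comp_eq_sum_measureReal (hZ : Measurable Z) (g : α → ℝ) :
    ∫ ω, g (Z ω) ∂μ = ∑ j, μ.real {ω | Z ω = j} * g j := by
  rw [← integral_map hZ.aemeasurable (measurable_of_finite g).aestronglyMeasurable,
    integral_fintype Integrable.of_finite]
  simp [map_measureReal_apply hZ (measurableSet_singleton _), Set.preimage, smul_eq_mul]

lemma integral_inv_mulVec_comp_sub_eq_zero [DecidableEq α] {P : Matrix α α ℝ}
    (hP : IsUnit P.det) {a : α} (hPa_nonneg : ∀ j, 0 ≤ P a j) (hPa_sum : ∑ j, P a j = 1)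
    (hZ : Measurable Z) (hZ_law : ∀ j, μ {ω | Z ω = j} = ENNReal.ofReal (P a j)) (d : α → ℝ) :
    ∫ ω, ((P⁻¹ *ᵥ d) (Z ω) - d a) ∂μ = 0 := by
  have hP_inv : (P *ᵥ (P⁻¹ *ᵥ d)) a = d a := by
    rw [mulVec_mulVec, mul_nonsing_inv P hP, one_mulVec]
  rw [integral_comp_eq_sum_measureReal hZ (fun j => (P⁻¹ *ᵥ d) j - d a)]
  simp only [measureReal_def, hZ_law, ENNReal.toReal_ofReal (hPa_nonneg _), mul_sub,
    sum_sub_distrib, ← sum_mul, hPa_sum, one_mul]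
  rw [← hP_inv]
  simp [mulVec, dotProduct]

end FiniteValued

section Hoeffding

variable {Ω : Type*} [MeasurableSpace Ω] {μ : Measure Ω}

lemma hasSubgaussianMGF_of_abs_le_of_integral_eq_zero [IsProbabilityMeasure μ] {X : Ω → ℝ}
    {c : ℝ} (hX : AEMeasurable X μ) (hb : ∀ᵐ ω ∂μ, |X ω| ≤ c) (h0 : μ[X] = 0) :
    HasSubgaussianMGF X (‖c‖₊ ^ 2) μ := by
  have h := hasSubgaussianMGF_of_mem_Icc_of_integral_eq_zero hX (hb.mono fun _ h => abs_le.1 h) h0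
  have hc : ‖c - -c‖₊ / 2 = ‖c‖₊ := by
    rw [sub_neg_eq_add, ← two_mul, nnnorm_mul, nnnorm_two, mul_div_cancel_left₀ _ two_ne_zero]
  rwa [hc] at h

variable {ι : Type*} {X : ι → Ω → ℝ} {c : ι → ℝ≥0} {s : Finset ι}

lemma measureReal_le_abs_sum_le_of_iIndepFun [IsFiniteMeasure μ] (h_indep : iIndepFun X μ)
    (h_subG : ∀ i ∈ s, HasSubgaussianMGF (X i) (c i) μ) {ε : ℝ} (hε : 0 ≤ ε) :
    μ.real {ω | ε ≤ |∑ i ∈ s, X i ω|} ≤ 2 * exp (-ε ^ 2 / (2 * ∑ i ∈ s, c i)) := by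
  have h_pos := HasSubgaussianMGF.measure_sum_ge_le_of_iIndepFun h_indep h_subG hε
  have h_neg : μ.real {ω | ε ≤ ∑ i ∈ s, -X i ω} ≤ exp (-ε ^ 2 / (2 * ∑ i ∈ s, c i)) :=
    HasSubgaussianMGF.measure_sum_ge_le_of_iIndepFun
      (h_indep.comp (fun _ x => -x) fun _ => measurable_neg) (fun i hi => (h_subG i hi).neg) hε
  calc μ.real {ω | ε ≤ |∑ i ∈ s, X i ω|}
      ≤ μ.real ({ω | ε ≤ ∑ i ∈ s, X i ω} ∪ {ω | ε ≤ ∑ i ∈ s, -X i ω}) := by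
        refine measureReal_mono fun ω hω => ?_
        rcases le_abs'.1 (show ε ≤ |∑ i ∈ s, X i ω| from hω) with h | h
        · right; simpa [sum_neg_distrib] using le_neg_of_le_neg h
        · left; exact h
    _ ≤ μ.real {ω | ε ≤ ∑ i ∈ s, X i ω} + μ.real {ω | ε ≤ ∑ i ∈ s, -X i ω} :=
        measureReal_union_le _ _
    _ ≤ 2 * exp (-ε ^ 2 / (2 * ∑ i ∈ s, c i)) := by linarith

lemma one_sub_le_measureReal_abs_sum_le_of_iIndepFun [IsProbabilityMeasure μ]
    (h_indep : iIndepFun X μ) (h_subG : ∀ i ∈ s, HasSubgaussianMGF (X i) (c i) μ)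
    (hc : 0 < ∑ i ∈ s, c i) {δ : ℝ} (hδ0 : 0 < δ) (hδ2 : δ ≤ 2) :
    1 - δ ≤ μ.real {ω | |∑ i ∈ s, X i ω| ≤ √(2 * (∑ i ∈ s, c i) * log (2 / δ))} := by
  set C : ℝ := ((∑ i ∈ s, c i : ℝ≥0) : ℝ)
  set t := √(2 * C * log (2 / δ))
  have hlog : 0 ≤ log (2 / δ) := log_nonneg (by rw [le_div_iff₀ hδ0]; linarith)
  have hC : (0 : ℝ) < C := by exact_mod_cast hc
  have h_exp : 2 * exp (-t ^ 2 / (2 * C)) = δ := by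
    have h_arg : -t ^ 2 / (2 * C) = -log (2 / δ) := by
      rw [sq_sqrt (by positivity)]
      field_simp
    rw [h_arg, exp_neg, exp_log (by positivity)]
    field_simp
  have h_tail :=
    measureReal_le_abs_sum_le_of_iIndepFun h_indep h_subG (sqrt_nonneg (2 * C * log (2 / δ)))
  have h_compl : μ.real {ω | |∑ i ∈ s, X i ω| ≤ t}ᶜ ≤ δ := by
    refine le_trans (measureReal_mono fun ω hω => ?_) (h_exp ▸ h_tail)
    exact (not_le.1 (show ¬|∑ i ∈ s, X i ω| ≤ t from hω)).le
  have h_univ : μ.real Set.univ ≤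
      μ.real {ω | |∑ i ∈ s, X i ω| ≤ t} + μ.real {ω | |∑ i ∈ s, X i ω| ≤ t}ᶜ := by
    rw [← Set.union_compl_self {ω | |∑ i ∈ s, X i ω| ≤ t}]
    exact measureReal_union_le _ _
  rw [probReal_univ] at h_univ
  linarith

lemma one_sub_le_measureReal_abs_mean_le_of_iIndepFun [IsProbabilityMeasure μ] [Fintype ι]
    [Nonempty ι] (h_indep : iIndepFun X μ) {c : ℝ} (hc : 0 < c)
    (h_subG : ∀ i, HasSubgaussianMGF (X i) (‖c‖₊ ^ 2) μ) {δ : ℝ} (hδ0 : 0 < δ) (hδ2 : δ ≤ 2) :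
    1 - δ ≤ μ.real {ω | |(1 / Fintype.card ι : ℝ) * ∑ i, X i ω|
      ≤ c * √(2 * log (2 / δ) / Fintype.card ι)} := by
  set n : ℝ := (Fintype.card ι : ℝ)
  have hn : 0 < n := by simp [n, Fintype.card_pos]
  have h_radius : √(2 * ((∑ _i : ι, ‖c‖₊ ^ 2 : ℝ≥0) : ℝ) * log (2 / δ))
      = n * (c * √(2 * log (2 / δ) / n)) := by
    have hlog : 0 ≤ log (2 / δ) := log_nonneg (by rw [le_div_iff₀ hδ0]; linarith)
    rw [← mul_assoc, ← sqrt_sq (by positivity : 0 ≤ n * c), ← sqrt_mul (by positivity)]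
    congr 1
    push_cast
    simp only [sum_const, card_univ, nsmul_eq_mul, norm_eq_abs, sq_abs]
    field_simp
    ring
  have h_sum := one_sub_le_measureReal_abs_sum_le_of_iIndepFun h_indep (fun i _ => h_subG i)
    (sum_pos (fun _ _ => pow_pos (nnnorm_pos.2 hc.ne') 2) univ_nonempty) hδ0 hδ2
  refine h_sum.trans (measureReal_mono fun ω hω => ?_)
  rw [Set.mem_ofPred_eq, h_radius] at hω
  rw [Set.mem_ofPred_eq, abs_mul, abs_of_pos (by positivity), one_div_mul_eq_div, div_le_iff₀ hn,
    mul_comm]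
  exact hω

end Hoeffding

theorem pseudolabel_score_concentration_general
    {Ω : Type*} [MeasurableSpace Ω] (μ : Measure Ω) [IsProbabilityMeasure μ]
    (k n : ℕ) (hn : 1 ≤ n)
    (P : Matrix (Fin k) (Fin k) ℝ)
    (hPinv : IsUnit P.det)
    (hPnonneg : ∀ i j, 0 ≤ P i j)
    (hProw : ∀ i, ∑ j, P i j = 1)
    (d : Fin k → ℝ) (hd : ∀ i, 0 ≤ d i ∧ d i ≤ 1)
    (dTilde : Fin k → ℝ) (hdTilde : dTilde = P⁻¹ *ᵥ d)
    (α : Fin n → ℝ) (hα : ∀ i, |α i| ≤ 1)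
    (r : Fin n → Fin k)
    (Z : Fin n → Ω → Fin k)
    (hZmeas : ∀ i, Measurable (Z i))
    (hindep : ProbabilityTheory.iIndepFun Z μ)
    (hZdist : ∀ i j, μ {ω | Z i ω = j} = ENNReal.ofReal (P (r i) j))
    (c₁ : ℝ) (hc₁ : c₁ = 1 + Real.sqrt k * ‖Matrix.toEuclideanCLM (𝕜 := ℝ) P⁻¹‖)
    (δ : ℝ) (hδ0 : 0 < δ) (hδ1 : δ < 1) :
    ENNReal.ofReal (1 - δ) ≤
      μ {ω | |(1 / n : ℝ) * ∑ i, α i * (dTilde (Z i ω) - d (r i))|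
          ≤ c₁ * Real.sqrt (2 * Real.log (2 / δ) / n)} := by
  have : Nonempty (Fin n) := ⟨⟨0, hn⟩⟩
  have hc₁0 : 0 < c₁ := by rw [hc₁]; positivity
  set g : Fin n → Fin k → ℝ := fun i j => α i * (dTilde j - d (r i))
  have hg_le : ∀ i j, |g i j| ≤ c₁ := fun i j => by
    show |α i * (dTilde j - d (r i))| ≤ c₁
    rw [hc₁, hdTilde]
    simpa using abs_mul_inv_mulVec_apply_sub_le (P := P) (hα i) hd j (r i)
  have hg_mean : ∀ i, ∫ ω, g i (Z i ω) ∂μ = 0 := fun i => by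
    rw [integral_const_mul, hdTilde, integral_inv_mulVec_comp_sub_eq_zero hPinv (hPnonneg (r i))
      (hProw (r i)) (hZmeas i) (hZdist i), mul_zero]
  have h_subG : ∀ i, HasSubgaussianMGF (fun ω => g i (Z i ω)) (‖c₁‖₊ ^ 2) μ := fun i =>
    hasSubgaussianMGF_of_abs_le_of_integral_eq_zero
      ((measurable_of_finite (g i)).comp (hZmeas i)).aemeasurable
      (ae_of_all _ fun ω => hg_le i (Z i ω)) (hg_mean i)
  have h_indep : iIndepFun (fun i ω => g i (Z i ω)) μ :=
    hindep.comp g fun i => measurable_of_finite (g i)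
  have h_conc := one_sub_le_measureReal_abs_mean_le_of_iIndepFun h_indep hc₁0 h_subG hδ0
    (by linarith)
  simp only [Fintype.card_fin] at h_conc
  exact ENNReal.ofReal_le_of_le_toReal h_conc

/-- Hoeffding concentration for the noise-corrected score. `P` is an
invertible row-stochastic noise matrix, `d̃ = P⁻¹ d` the perturbed distances,
`Z i` independent noisy labels with `Pr(Z i = j) = P (r i) j`, and
`c₁ = 1 + √k ‖P⁻¹‖`. Then with probability at least `1 - δ`,
`|(1/n) ∑ i α i (d̃ (Z i) - d (r i))| ≤ c₁ √(2 log(2/δ) / n)`. -/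
theorem pseudolabel_score_concentration
    {Ω : Type*} [MeasurableSpace Ω] (μ : Measure Ω) [IsProbabilityMeasure μ]
    (k n : ℕ) (hk : 1 ≤ k) (hn : 1 ≤ n)
    (P : Matrix (Fin k) (Fin k) ℝ)
    (hPinv : IsUnit P.det)
    (hPnonneg : ∀ i j, 0 ≤ P i j)
    (hProw : ∀ i, ∑ j, P i j = 1)
    (d : Fin k → ℝ) (hd : ∀ i, 0 ≤ d i ∧ d i ≤ 1)
    (dTilde : Fin k → ℝ) (hdTilde : dTilde = P⁻¹ *ᵥ d)
    (α : Fin n → ℝ) (hα : ∀ i, |α i| ≤ 1)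
    (r : Fin n → Fin k)
    (Z : Fin n → Ω → Fin k)
    (hZmeas : ∀ i, Measurable (Z i))
    (hindep : ProbabilityTheory.iIndepFun Z μ)
    (hZdist : ∀ i j, μ {ω | Z i ω = j} = ENNReal.ofReal (P (r i) j))
    (c₁ : ℝ) (hc₁ : c₁ = 1 + Real.sqrt k * ‖Matrix.toEuclideanCLM (𝕜 := ℝ) P⁻¹‖)
    (δ : ℝ) (hδ0 : 0 < δ) (hδ1 : δ < 1) :
    ENNReal.ofReal (1 - δ) ≤
      μ {ω | |(1 / n : ℝ) * ∑ i, α i * (dTilde (Z i ω) - d (r i))|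
          ≤ c₁ * Real.sqrt (2 * Real.log (2 / δ) / n)} :=
  pseudolabel_score_concentration_general μ k n hn P hPinv hPnonneg hProw d hd dTilde hdTilde α hα r
    Z hZmeas hindep hZdist c₁ hc₁ δ hδ0 hδ1
end

section
/- Let (Y, d_Y) be a finite metric space with exactly k elements y_1,…,y_k and with all distances at most 1, let m ≥ 1, and let p : Y → ℝ be a prior with p(y) ≥ 0 and Σ_y p(y) = 1. For θ ∈ ℝ^m define the label-model likelihood P_θ(u | y) = exp(−Σ_{a=1}^m θ_a d_Y(u_a, y)²) / Z_θ(y) for u ∈ Y^m, where Z_θ(y) = Σ_{u'∈Y^m} exp(−Σ_a θ_a d_Y(u'_a, y)²), and the posterior π_θ(y | u) = p(y) P_θ(u | y) / Σ_{y'∈Y} p(y') P_θ(u | y'). Define the induced pseudolabel noise matrix P(θ)_{ij} = Σ_{u∈Y^m} π_θ(y_j | u) · P_θ(u | y_i). Then for all θ, θ̂ ∈ ℝ^m, max_{i,j} |P(θ)_{ij} − P(θ̂)_{ij}| ≤ 4 · k^m · max_{a} |θ_a − θ̂_a|. -/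
lemma aux_two_mul_le_two_pow (m : ℕ) (hm : 1 ≤ m) : 2*m ≤ 2^m := by
  induction m with
  | zero => omega
  | succ n ih =>
    rcases Nat.lt_or_ge n 1 with h | h
    · interval_cases n <;> norm_num
    · have h2 : 2 ≤ 2^n := by
        have := Nat.one_lt_two_pow_iff.mpr (by omega : n ≠ 0); omega
      have := ih h
      have h3 : 2*(n+1) ≤ 2^n + 2^n := by omega
      calc 2*(n+1) ≤ 2^n + 2^n := h3
        _ = 2^(n+1) := by ring

lemma aux_exp_le {x : ℝ} (h0 : 0 ≤ x) (h1 : x ≤ 1) : Real.exp x ≤ 1 + 2*x := by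
  have hc := convexOn_exp.2 (Set.mem_univ (0:ℝ)) (Set.mem_univ (1:ℝ))
    (by linarith : (0:ℝ) ≤ 1 - x) h0 (by ring)
  simp only [smul_eq_mul, mul_zero, mul_one, Real.exp_zero, zero_add] at hc
  have he : Real.exp 1 < 2.7182818286 := Real.exp_one_lt_d9
  nlinarith [hc, he, mul_le_mul_of_nonneg_left he.le h0]

/-- Lipschitz dependence of the induced pseudolabel noise matrix on the
canonical parameters. `Y` is a finite metric space with `k` elements (enumerated by the
equivalence `y : Fin k ≃ Y`) and all distances at most 1, `L t u z` is the label-model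
likelihood `P_t(Λ = u ∣ Y = z)`, `π t z u` the posterior `P_t(Y = z ∣ Λ = u)` w.r.t. prior
`p`, and `N t i j = Pr_t(Z̃ = y_j ∣ Y = y_i)` the induced noise matrix. Then
`max_{i,j} |N θ i j - N θ̂ i j| ≤ 4 k^m max_a |θ_a - θ̂_a|`. -/
theorem noise_matrix_lipschitz
    {Y : Type*} [MetricSpace Y] [Fintype Y]
    (k m : ℕ) (hk : 1 ≤ k) (hm : 1 ≤ m)
    (y : Fin k ≃ Y)
    (hdist : ∀ a b : Y, dist a b ≤ 1)
    (p : Y → ℝ) (hp : ∀ z, 0 ≤ p z) (hpsum : ∑ z, p z = 1)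
    (L : (Fin m → ℝ) → (Fin m → Y) → Y → ℝ)
    (hL : ∀ t u z, L t u z =
      Real.exp (-∑ a, t a * dist (u a) z ^ 2)
        / ∑ u' : Fin m → Y, Real.exp (-∑ a, t a * dist (u' a) z ^ 2))
    (π : (Fin m → ℝ) → Y → (Fin m → Y) → ℝ)
    (hπ : ∀ t z u, π t z u = p z * L t u z / ∑ z' : Y, p z' * L t u z')
    (N : (Fin m → ℝ) → Fin k → Fin k → ℝ)
    (hN : ∀ t i j, N t i j = ∑ u : Fin m → Y, π t (y j) u * L t u (y i))
    (θ θhat : Fin m → ℝ) :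
    ∀ i j, |N θ i j - N θhat i j| ≤ 4 * (k : ℝ) ^ m * ⨆ a, |θ a - θhat a| := by
  intro i j
  have hmne : Nonempty (Fin m) := ⟨⟨0, hm⟩⟩
  have hYne : Nonempty Y := ⟨y ⟨0, hk⟩⟩
  set D := ⨆ a, |θ a - θhat a| with hDdef
  have hDa : ∀ a, |θ a - θhat a| ≤ D := fun a =>
    le_ciSup (f := fun a => |θ a - θhat a|)
      (Set.Finite.bddAbove (Set.finite_range _)) a
  have hD0 : 0 ≤ D := le_trans (abs_nonneg _) (hDa ⟨0, hm⟩)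
  -- distances squared are in [0,1]
  have hdsq : ∀ a b : Y, 0 ≤ dist a b ^ 2 ∧ dist a b ^ 2 ≤ 1 := by
    intro a b
    constructor
    · positivity
    · nlinarith [dist_nonneg (x := a) (y := b), hdist a b]
  -- positivity of Z
  have hZpos : ∀ (t : Fin m → ℝ) (z : Y),
      0 < ∑ u' : Fin m → Y, Real.exp (-∑ a, t a * dist (u' a) z ^ 2) := by
    intro t z
    apply Finset.sum_pos (fun _ _ => Real.exp_pos _) Finset.univ_nonempty
  have hLpos : ∀ t u z, 0 < L t u z := by
    intro t u z
    rw [hL]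
    exact div_pos (Real.exp_pos _) (hZpos t z)
  obtain ⟨z0, hz0⟩ : ∃ z0, 0 < p z0 := by
    by_contra h
    push_neg at h
    have : ∀ z, p z = 0 := fun z => le_antisymm (h z) (hp z)
    simp [this] at hpsum
  have hBpos : ∀ (t : Fin m → ℝ) (u : Fin m → Y), 0 < ∑ z' : Y, p z' * L t u z' := by
    intro t u
    exact Finset.sum_pos' (fun z _ => mul_nonneg (hp z) (hLpos t u z).le)
      ⟨z0, Finset.mem_univ _, mul_pos hz0 (hLpos t u z0)⟩
  have hπ_nonneg : ∀ t z u, 0 ≤ π t z u := by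
    intro t z u
    rw [hπ]
    exact div_nonneg (mul_nonneg (hp z) (hLpos t u z).le) (hBpos t u).le
  have hπ_le_one : ∀ t z u, π t z u ≤ 1 := by
    intro t z u
    rw [hπ, div_le_one (hBpos t u)]
    exact Finset.single_le_sum (f := fun z' => p z' * L t u z')
      (fun z' _ => mul_nonneg (hp z') (hLpos t u z').le) (Finset.mem_univ z)
  have hLsum : ∀ t z, ∑ u : Fin m → Y, L t u z = 1 := by
    intro t z
    simp only [hL]
    rw [← Finset.sum_div, div_self (hZpos t z).ne']
  have hN01 : ∀ t : Fin m → ℝ, 0 ≤ N t i j ∧ N t i j ≤ 1 := by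
    intro t
    rw [hN]
    constructor
    · exact Finset.sum_nonneg fun u _ => mul_nonneg (hπ_nonneg _ _ _) (hLpos _ _ _).le
    · calc ∑ u : Fin m → Y, π t (y j) u * L t u (y i)
          ≤ ∑ u : Fin m → Y, L t u (y i) := by
            apply Finset.sum_le_sum
            intro u _
            exact mul_le_of_le_one_left (hLpos _ _ _).le (hπ_le_one _ _ _)
      _ = 1 := hLsum t (y i)
  -- the key exponent estimate
  have hkey : ∀ t s : Fin m → ℝ, (∀ a, |t a - s a| ≤ D) →
      ∀ (u u' : Fin m → Y) (z : Y),
      Real.exp (-∑ a, t a * dist (u a) z ^ 2) * Real.exp (-∑ a, s a * dist (u' a) z ^ 2)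
      ≤ Real.exp (m * D) *
        (Real.exp (-∑ a, s a * dist (u a) z ^ 2) * Real.exp (-∑ a, t a * dist (u' a) z ^ 2)) := by
    intro t s h u u' z
    rw [← Real.exp_add, ← Real.exp_add, ← Real.exp_add, Real.exp_le_exp]
    have hsum : (∑ a, s a * dist (u a) z ^ 2) - (∑ a, t a * dist (u a) z ^ 2)
        + ((∑ a, t a * dist (u' a) z ^ 2) - (∑ a, s a * dist (u' a) z ^ 2))
        = ∑ a, (t a - s a) * (dist (u' a) z ^ 2 - dist (u a) z ^ 2) := by
      rw [← Finset.sum_sub_distrib, ← Finset.sum_sub_distrib, ← Finset.sum_add_distrib]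
      exact Finset.sum_congr rfl fun a _ => by ring
    have hbound : ∑ a, (t a - s a) * (dist (u' a) z ^ 2 - dist (u a) z ^ 2) ≤ m * D := by
      calc ∑ a, (t a - s a) * (dist (u' a) z ^ 2 - dist (u a) z ^ 2)
          ≤ ∑ _a : Fin m, D := by
            apply Finset.sum_le_sum
            intro a _
            have h1 := hdsq (u a) z
            have h2 := hdsq (u' a) z
            have habs : |dist (u' a) z ^ 2 - dist (u a) z ^ 2| ≤ 1 := by
              rw [abs_sub_le_iff]; constructor <;> linarith [h1.1, h1.2, h2.1, h2.2]
            calc (t a - s a) * (dist (u' a) z ^ 2 - dist (u a) z ^ 2)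
                ≤ |(t a - s a) * (dist (u' a) z ^ 2 - dist (u a) z ^ 2)| := le_abs_self _
              _ = |t a - s a| * |dist (u' a) z ^ 2 - dist (u a) z ^ 2| := abs_mul _ _
              _ ≤ D * 1 := mul_le_mul (h a) habs (abs_nonneg _) hD0
              _ = D := mul_one D
        _ = m * D := by rw [Finset.sum_const, Finset.card_univ, Fintype.card_fin, nsmul_eq_mul]
    linarith [hsum, hbound]
  -- ratio bound on L
  have hLr : ∀ t s : Fin m → ℝ, (∀ a, |t a - s a| ≤ D) →
      ∀ u z, L t u z ≤ Real.exp (m * D) * L s u z := by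
    intro t s h u z
    rw [hL, hL, mul_div_assoc', div_le_div_iff₀ (hZpos t z) (hZpos s z), Finset.mul_sum,
      Finset.mul_sum]
    apply Finset.sum_le_sum
    intro u' _
    have := hkey t s h u u' z
    calc Real.exp (-∑ a, t a * dist (u a) z ^ 2) * Real.exp (-∑ a, s a * dist (u' a) z ^ 2)
        ≤ Real.exp (m * D) *
          (Real.exp (-∑ a, s a * dist (u a) z ^ 2) * Real.exp (-∑ a, t a * dist (u' a) z ^ 2)) :=
          this
      _ = Real.exp (m * D) * Real.exp (-∑ a, s a * dist (u a) z ^ 2) *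
            Real.exp (-∑ a, t a * dist (u' a) z ^ 2) := by ring
  -- ratio bound on B
  have hBr : ∀ t s : Fin m → ℝ, (∀ a, |t a - s a| ≤ D) → ∀ u,
      (∑ z' : Y, p z' * L t u z') ≤ Real.exp (m * D) * ∑ z' : Y, p z' * L s u z' := by
    intro t s h u
    rw [Finset.mul_sum]
    apply Finset.sum_le_sum
    intro z' _
    calc p z' * L t u z' ≤ p z' * (Real.exp (m * D) * L s u z') :=
          mul_le_mul_of_nonneg_left (hLr t s h u z') (hp z')
      _ = Real.exp (m * D) * (p z' * L s u z') := by ring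
  -- ratio bound on π
  have hπr : ∀ t s : Fin m → ℝ, (∀ a, |t a - s a| ≤ D) → ∀ z u,
      π t z u ≤ Real.exp (m * D) ^ 2 * π s z u := by
    intro t s h z u
    have h' : ∀ a, |s a - t a| ≤ D := fun a => by rw [abs_sub_comm]; exact h a
    rw [hπ, hπ, mul_div_assoc', div_le_div_iff₀ (hBpos t u) (hBpos s u)]
    have h1 : p z * L t u z ≤ Real.exp (m * D) * (p z * L s u z) := by
      calc p z * L t u z ≤ p z * (Real.exp (m * D) * L s u z) :=
            mul_le_mul_of_nonneg_left (hLr t s h u z) (hp z)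
        _ = Real.exp (m * D) * (p z * L s u z) := by ring
    have h2 := hBr s t h' u
    have e1 : (0:ℝ) < Real.exp (m * D) := Real.exp_pos _
    nlinarith [mul_nonneg (hp z) (hLpos t u z).le, mul_nonneg (hp z) (hLpos s u z).le,
      (hBpos t u), (hBpos s u), mul_le_mul h1 h2
        (hBpos s u).le (mul_nonneg (Real.exp_pos _).le
          (mul_nonneg (hp z) (hLpos s u z).le))]
  -- ratio bound on N
  have hNr : ∀ t s : Fin m → ℝ, (∀ a, |t a - s a| ≤ D) →
      N t i j ≤ Real.exp (m * D) ^ 3 * N s i j := by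
    intro t s h
    rw [hN, hN, Finset.mul_sum]
    apply Finset.sum_le_sum
    intro u _
    have h1 := hπr t s h (y j) u
    have h2 := hLr t s h u (y i)
    have e1 : (0:ℝ) < Real.exp (m * D) := Real.exp_pos _
    calc π t (y j) u * L t u (y i)
        ≤ (Real.exp (m * D) ^ 2 * π s (y j) u) * (Real.exp (m * D) * L s u (y i)) :=
          mul_le_mul h1 h2 (hLpos t u (y i)).le
            (mul_nonneg (by positivity) (hπ_nonneg s (y j) u))
      _ = Real.exp (m * D) ^ 3 * (π s (y j) u * L s u (y i)) := by ring
  have hsymm : ∀ a, |θhat a - θ a| ≤ D := fun a => by rw [abs_sub_comm]; exact hDa a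
  have hc1 : (1:ℝ) ≤ Real.exp (m * D) ^ 3 := by
    have : (1:ℝ) ≤ Real.exp (m * D) := Real.one_le_exp (by positivity)
    exact one_le_pow₀ this
  have hmain : |N θ i j - N θhat i j| ≤ Real.exp (3 * (m * D)) - 1 := by
    have hexp3 : Real.exp (3 * (m * D)) = Real.exp (m * D) ^ 3 := by
      rw [show ((3:ℝ)) = ((3:ℕ):ℝ) by norm_num, Real.exp_nat_mul]
    rw [hexp3, abs_sub_le_iff]
    have hr1 := hNr θ θhat hDa
    have hr2 := hNr θhat θ hsymm
    have h01 := hN01 θ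
    have h02 := hN01 θhat
    constructor
    · nlinarith [h02.1, h02.2]
    · nlinarith [h01.1, h01.2]
  -- final case analysis
  by_cases hk1 : k = 1
  · -- Y is a subsingleton; N does not depend on t
    have hcard : Fintype.card Y = 1 := by
      have h := Fintype.card_congr y.symm
      rw [Fintype.card_fin] at h
      omega
    have hss : Subsingleton Y := Fintype.card_le_one_iff_subsingleton.mp (le_of_eq hcard)
    have hd0 : ∀ (a b : Y), dist a b = 0 := fun a b => by
      rw [hss.elim a b, dist_self]
    have hLeq : ∀ u z, L θ u z = L θhat u z := by
      intro u z; rw [hL, hL]; simp [hd0]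
    have hπeq : ∀ z u, π θ z u = π θhat z u := by
      intro z u; rw [hπ, hπ]
      simp only [hLeq]
    have : N θ i j = N θhat i j := by
      rw [hN, hN]
      exact Finset.sum_congr rfl fun u _ => by rw [hπeq, hLeq]
    rw [this, sub_self, abs_zero]
    positivity
  · have hk2 : 2 ≤ k := by omega
    have hpow : (2:ℝ)^m ≤ (k:ℝ)^m := by
      apply pow_le_pow_left₀ (by norm_num)
      exact_mod_cast hk2
    have h2m : (2:ℝ) * m ≤ 2^m := by
      have := aux_two_mul_le_two_pow m hm
      exact_mod_cast this
    by_cases hsmall : 3 * (m:ℝ) * D ≤ 1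
    · calc |N θ i j - N θhat i j| ≤ Real.exp (3 * (m * D)) - 1 := hmain
        _ ≤ 1 + 2 * (3 * (m * D)) - 1 := by
            have := aux_exp_le (x := 3 * (m * D)) (by positivity) (by linarith [hsmall])
            linarith
        _ = 6 * m * D := by ring
        _ ≤ 4 * (k:ℝ)^m * D := by nlinarith
    · push_neg at hsmall
      have h01 := hN01 θ
      have h02 := hN01 θhat
      have habs : |N θ i j - N θhat i j| ≤ 1 := by
        rw [abs_sub_le_iff]; constructor <;> linarith [h01.1, h01.2, h02.1, h02.2]
      have : (1:ℝ) ≤ 4 * (k:ℝ)^m * D := by nlinarith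
      linarith
end

section
/- Let (Y, d_Y) be a finite metric space. Then there exist natural numbers d⁺, d⁻ and maps g⁺ : Y → ℝ^{d⁺}, g⁻ : Y → ℝ^{d⁻} such that for all x, y ∈ Y, ‖g⁺(x) − g⁺(y)‖² − ‖g⁻(x) − g⁻(y)‖² = d_Y(x, y)², where ‖·‖ denotes the Euclidean norm. That is, every finite metric space embeds isometrically (with no distortion of squared distances) into a pseudo-Euclidean space. -/
/-!
The symmetric matrix `A x y = -d(x, y)² / 2` is, by the spectral theorem, the difference of the
Gram matrices of two families `u`, `v` of Euclidean vectors, built from the positive and the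
negative parts of its eigenvalues. Expanding the squares,
`‖u x - u y‖² - ‖v x - v y‖² = A x x + A y y - 2 A x y = d(x, y)²`, because `A` vanishes on the
diagonal. (The paper's base-point matrix `M` differs from `A` by a term `f x + f y`, which cancels
in this expression.)
-/

open Matrix

namespace Matrix

variable {ι κ : Type*} [Fintype κ]

lemma gram_toLp_eq_mul_transpose (B : Matrix ι κ ℝ) :
    gram ℝ (fun i => WithLp.toLp 2 (B i)) = B * Bᵀ := by
  ext i j
  simp [mul_apply, PiLp.inner_apply, mul_comm]

lemma gram_toLp_mul_diagonal_sqrt [DecidableEq κ] (U : Matrix ι κ ℝ) {s : κ → ℝ} (hs : 0 ≤ s) :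
    gram ℝ (fun i => WithLp.toLp 2 ((U * diagonal fun k => √(s k)) i)) = U * diagonal s * Uᵀ := by
  rw [gram_toLp_eq_mul_transpose, transpose_mul, diagonal_transpose, Matrix.mul_assoc,
    ← Matrix.mul_assoc (diagonal _), diagonal_mul_diagonal, ← Matrix.mul_assoc]
  simp_rw [Real.mul_self_sqrt (hs _)]

lemma IsHermitian.exists_eq_gram_sub_gram [DecidableEq κ] {A : Matrix κ κ ℝ}
    (hA : A.IsHermitian) :
    ∃ u v : κ → EuclideanSpace ℝ κ, A = gram ℝ u - gram ℝ v := by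
  set U : Matrix κ κ ℝ := (hA.eigenvectorUnitary : Matrix κ κ ℝ)
  set μ := hA.eigenvalues
  refine ⟨fun i => WithLp.toLp 2 ((U * diagonal fun k => √(μ⁺ k)) i),
    fun i => WithLp.toLp 2 ((U * diagonal fun k => √(μ⁻ k)) i), ?_⟩
  rw [gram_toLp_mul_diagonal_sqrt U (posPart_nonneg μ),
    gram_toLp_mul_diagonal_sqrt U (negPart_nonneg μ), ← sub_mul, ← mul_sub, diagonal_sub,
    ← Pi.sub_def, posPart_sub_negPart]
  conv_lhs => rw [hA.spectral_theorem]
  simp [U, μ, star_eq_conjTranspose]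

end Matrix

lemma norm_sub_sq_sub_norm_sub_sq_of_eq_gram_sub_gram {ι E F : Type*}
    [NormedAddCommGroup E] [InnerProductSpace ℝ E] [NormedAddCommGroup F] [InnerProductSpace ℝ F]
    {A : Matrix ι ι ℝ} {u : ι → E} {v : ι → F} (hA : A = gram ℝ u - gram ℝ v) (i j : ι) :
    ‖u i - u j‖ ^ 2 - ‖v i - v j‖ ^ 2 = A i i + A j j - 2 * A i j := by
  simp only [hA, Matrix.sub_apply, gram_apply, norm_sub_sq_real, real_inner_self_eq_norm_sq]
  ring

theorem exists_pseudoEuclidean_embedding {ι : Type*} [Fintype ι] [DecidableEq ι]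
    {δ : ι → ι → ℝ} (hδ_symm : ∀ i j, δ i j = δ j i) (hδ_self : ∀ i, δ i i = 0) :
    ∃ u v : ι → EuclideanSpace ℝ ι, ∀ i j, ‖u i - u j‖ ^ 2 - ‖v i - v j‖ ^ 2 = δ i j := by
  set A : Matrix ι ι ℝ := of fun i j => -δ i j / 2
  have hA : A.IsHermitian := by
    ext i j
    simp [A, hδ_symm i j]
  obtain ⟨u, v, huv⟩ := hA.exists_eq_gram_sub_gram
  refine ⟨u, v, fun i j => ?_⟩
  rw [norm_sub_sq_sub_norm_sub_sq_of_eq_gram_sub_gram huv]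
  simp only [of_apply, hδ_self, neg_zero, zero_div, add_zero, zero_sub, A]
  ring

/-- Every finite metric space embeds isometrically (for squared
distances) into a pseudo-Euclidean space: there exist `d⁺, d⁻` and maps
`g⁺ : Y → ℝ^{d⁺}`, `g⁻ : Y → ℝ^{d⁻}` such that
`‖g⁺x - g⁺y‖² - ‖g⁻x - g⁻y‖² = d_Y(x,y)²` for all `x, y`. -/
theorem finite_metric_space_pseudo_euclidean_embedding
    {Y : Type*} [MetricSpace Y] [Fintype Y] :
    ∃ (dp dm : ℕ) (gp : Y → EuclideanSpace ℝ (Fin dp)) (gm : Y → EuclideanSpace ℝ (Fin dm)),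
      ∀ x y : Y, ‖gp x - gp y‖ ^ 2 - ‖gm x - gm y‖ ^ 2 = dist x y ^ 2 := by
  classical
  obtain ⟨u, v, huv⟩ := exists_pseudoEuclidean_embedding (δ := fun x y : Y => dist x y ^ 2)
    (fun x y => by rw [dist_comm]) (fun x => by simp)
  let e := LinearIsometryEquiv.piLpCongrLeft 2 ℝ ℝ (Fintype.equivFin Y)
  refine ⟨_, _, e ∘ u, e ∘ v, fun x y => ?_⟩
  simp only [Function.comp_apply, ← map_sub, LinearIsometryEquiv.norm_map, huv]
end
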